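/- Let S' be a possibly disconnected surface obtained from a surface S (with k components, total Euler genus g, and b boundary components) by a sequence of essential cutting operations. Then the number of connected components of S' is at most k + g + b. -/

import Mathlib

/-!
Give a component of genus `g` with `b` boundary circles the weight `max 1 (g + b)`. Every
component weighs at least one, so the total weight bounds the number of components, and it is
at most `k + g + b` initially. An essential cut never increases the total weight: lowering the
genus of a component cannot raise its weight, and when a component splits into two, each piece
has positive genus or a boundary circle, so the two weights are just `g₁ + b₁` and `g₂ + b₂`,
which add up to `g + b`.
-/

/-- A connected component of a possibly disconnected surface with boundary, recorded
(following the classification of surfaces) by its Euler genus and its number of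
boundary components. -/
structure SurfComp where
  genus : ℕ
  boundary : ℕ
deriving DecidableEq

/-- A possibly disconnected surface with boundary, up to homeomorphism. -/
abbrev BSurf := Multiset SurfComp

/-- Total Euler genus. -/
def totGenus (S : BSurf) : ℕ := (S.map SurfComp.genus).sum

/-- Total number of boundary components. -/
def totBoundary (S : BSurf) : ℕ := (S.map SurfComp.boundary).sum

/-- Number of connected components. -/
def nComp (S : BSurf) : ℕ := Multiset.card S

/-- An essential cutting operation (cutting along a non-contractible simple closed
curve in the interior and attaching disks to the new boundary circles): either it
reduces the Euler genus of one component by 1 or 2, keeping the number of components,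
or it splits one component into two components whose genera sum to that of the original
and whose boundary components are partitioned among them, each new component having
positive genus or containing a boundary component. -/
def EssCut (S S' : BSurf) : Prop :=
  (∃ C ∈ S, ∃ d : ℕ, (d = 1 ∨ d = 2) ∧ d ≤ C.genus ∧
      S' = (S.erase C) + {⟨C.genus - d, C.boundary⟩})
  ∨ (∃ C ∈ S, ∃ C₁ C₂ : SurfComp, C₁.genus + C₂.genus = C.genus ∧
      C₁.boundary + C₂.boundary = C.boundary ∧
      (0 < C₁.genus ∨ 0 < C₁.boundary) ∧ (0 < C₂.genus ∨ 0 < C₂.boundary) ∧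
      S' = (S.erase C) + {C₁, C₂})

/-- The potential `φ(S) = 2·(total genus) − (number of components)`. -/
def potential (S : BSurf) : ℤ := 2 * (totGenus S : ℤ) - (nComp S : ℤ)

namespace SurfComp

def weight (C : SurfComp) : ℕ := max 1 (C.genus + C.boundary)

theorem one_le_weight (C : SurfComp) : 1 ≤ C.weight := le_max_left _ _

theorem weight_le (C : SurfComp) : C.weight ≤ 1 + C.genus + C.boundary := by
  unfold weight; omega

end SurfComp

namespace BSurf

def weight (S : BSurf) : ℕ := (S.map SurfComp.weight).sum

theorem weight_erase_add {C : SurfComp} {S : BSurf} (hC : C ∈ S) (R : BSurf) :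
    weight (S.erase C + R) + C.weight = weight S + weight R := by
  conv_rhs => rw [← Multiset.cons_erase hC]
  simp only [weight, Multiset.map_add, Multiset.sum_add, Multiset.map_cons, Multiset.sum_cons]
  omega

theorem nComp_le_weight (S : BSurf) : nComp S ≤ weight S := by
  simpa [nComp, weight] using
    Multiset.sum_map_le_sum_map (s := S) (fun _ => 1) SurfComp.weight fun C _ => C.one_le_weight

theorem weight_le_nComp_add (S : BSurf) :
    weight S ≤ nComp S + totGenus S + totBoundary S := by
  have := Multiset.sum_map_le_sum_map (s := S) SurfComp.weight
    (fun C => 1 + C.genus + C.boundary) fun C _ => C.weight_le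
  simpa [weight, nComp, totGenus, totBoundary, Multiset.sum_map_add] using this

theorem weight_le_of_essCut {S S' : BSurf} (h : EssCut S S') : weight S' ≤ weight S := by
  rcases h with ⟨C, hC, d, -, hd, rfl⟩ | ⟨C, hC, C₁, C₂, hg, hb, h₁, h₂, rfl⟩
  · have hw : weight {⟨C.genus - d, C.boundary⟩} ≤ C.weight := by
      simp only [weight, Multiset.map_singleton, Multiset.sum_singleton, SurfComp.weight]
      omega
    have := weight_erase_add hC {⟨C.genus - d, C.boundary⟩}
    omega
  · have hw : weight {C₁, C₂} ≤ C.weight := by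
      simp only [weight, Multiset.insert_eq_cons, Multiset.map_cons, Multiset.map_singleton,
        Multiset.sum_cons, Multiset.sum_singleton, SurfComp.weight]
      omega
    have := weight_erase_add hC {C₁, C₂}
    omega

theorem weight_le_of_reflTransGen_essCut {S T : BSurf}
    (h : Relation.ReflTransGen EssCut S T) : weight T ≤ weight S := by
  induction h with
  | refl => exact le_rfl
  | tail _ hstep ih => exact (weight_le_of_essCut hstep).trans ih

end BSurf

/-- if `S'` is obtained from a surface `S` with `k` components, total
Euler genus `g` and `b` boundary components by a sequence of essential cutting
operations, then `S'` has at most `k + g + b` connected components. -/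
theorem essCut_components_le (S T : BSurf) (k g b : ℕ)
    (hk : nComp S = k) (hg : totGenus S = g) (hb : totBoundary S = b)
    (h : Relation.ReflTransGen EssCut S T) :
    nComp T ≤ k + g + b := by
  subst hk hg hb
  calc nComp T ≤ BSurf.weight T := BSurf.nComp_le_weight T
    _ ≤ BSurf.weight S := BSurf.weight_le_of_reflTransGen_essCut h
    _ ≤ nComp S + totGenus S + totBoundary S := BSurf.weight_le_nComp_add S
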